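/- arXiv:0912.3089 — 7 statements merged into one kernel-verified Lean document; each statement's English description precedes it below -/
import Mathlib

section
/- Let G > 0, B ≥ 0, and consider max over π ≥ 0 of min(π·G·e^{−(1+π)}, π·B). If B ≥ G·e^{−2}, the maximum is attained at π* = 1 with value G·e^{−2}. If 0 < B < G·e^{−2}, the maximum is attained at π* = ln(G/B) − 1 with value B·(ln(G/B) − 1). -/
/-!
Both branches rest on `x ≤ e^{x-1}`. It bounds the demand-limited revenue `π G e^{-(1+π)}`
by `G e^{-2}` (attained at `π = 1`), and it shows that this revenue decreases on `[1, ∞)`.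
If `B ≥ G e^{-2}` the supply constraint is slack at `π = 1`. Otherwise the optimum is the
market-clearing price `p = ln(G/B) - 1`, where `G e^{-(1+p)} = B` and `p > 1`: below `p` the
supply-limited revenue `π B` is increasing, above it the demand-limited one is decreasing.
-/

-- Closed before the main theorem, where `open Real` would turn the bound `π` into `Real.pi`.
section

open Real Set

noncomputable def revenue (G B x : ℝ) : ℝ := min (x * G * exp (-(1 + x))) (x * B)

lemma mul_exp_neg_one_add_le_exp_neg_two (x : ℝ) : x * exp (-(1 + x)) ≤ exp (-2) := by
  have hx : x ≤ exp (x - 1) := by linarith [add_one_le_exp (x - 1)]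
  calc x * exp (-(1 + x)) ≤ exp (x - 1) * exp (-(1 + x)) := by gcongr
    _ = exp (-2) := by rw [← exp_add]; ring_nf

lemma mul_exp_neg_one_add_antitoneOn :
    AntitoneOn (fun x : ℝ => x * exp (-(1 + x))) (Ici 1) := by
  intro s (hs : 1 ≤ s) t _ hst
  have ht : t ≤ s * exp (t - s) := by
    calc t ≤ s * (t - s + 1) := by nlinarith
      _ ≤ s * exp (t - s) := by gcongr; exact add_one_le_exp _
  calc t * exp (-(1 + t)) ≤ s * exp (t - s) * exp (-(1 + t)) := by gcongr
    _ = s * exp (-(1 + s)) := by rw [mul_assoc, ← exp_add]; ring_nf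

lemma isMaxOn_revenue_one {G B : ℝ} (hG : 0 ≤ G) (hB : G * exp (-2) ≤ B) :
    IsMaxOn (revenue G B) univ 1 := by
  intro x _
  have h_one : revenue G B 1 = G * exp (-2) := by
    rw [revenue, min_eq_left] <;> norm_num [hB]
  calc revenue G B x ≤ x * G * exp (-(1 + x)) := min_le_left _ _
    _ = G * (x * exp (-(1 + x))) := by ring
    _ ≤ G * exp (-2) := by gcongr; exact mul_exp_neg_one_add_le_exp_neg_two x
    _ = revenue G B 1 := h_one.symm

lemma revenue_of_clearing {G B p : ℝ} (hp : G * exp (-(1 + p)) = B) :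
    revenue G B p = p * B := by
  rw [revenue, mul_assoc, hp, min_self]

lemma isMaxOn_revenue_of_clearing {G B p : ℝ} (hG : 0 ≤ G) (hB : 0 ≤ B) (hp1 : 1 ≤ p)
    (hp : G * exp (-(1 + p)) = B) : IsMaxOn (revenue G B) univ p := by
  intro x _
  show revenue G B x ≤ revenue G B p
  rw [revenue_of_clearing hp]
  rcases le_total x p with hxp | hpx
  · calc revenue G B x ≤ x * B := min_le_right _ _
      _ ≤ p * B := by gcongr
  · have hdec := mul_exp_neg_one_add_antitoneOn (mem_Ici.2 hp1) (mem_Ici.2 (hp1.trans hpx)) hpx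
    calc revenue G B x ≤ x * G * exp (-(1 + x)) := min_le_left _ _
      _ = G * (x * exp (-(1 + x))) := by ring
      _ ≤ G * (p * exp (-(1 + p))) := by gcongr
      _ = p * B := by rw [← hp]; ring

lemma clearing_price_spec {G B : ℝ} (hB : 0 < B) (hBG : B < G * exp (-2)) :
    1 < log (G / B) - 1 ∧ G * exp (-(1 + (log (G / B) - 1))) = B := by
  have hG : 0 < G := pos_of_mul_pos_left (hB.trans hBG) (exp_pos _).le
  have h_exp_two : exp 2 < G / B := by
    rw [lt_div_iff₀ hB]
    calc exp 2 * B < exp 2 * (G * exp (-2)) := by gcongr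
      _ = G := by rw [mul_left_comm, ← exp_add]; norm_num
  refine ⟨by linarith [(lt_log_iff_exp_lt (by positivity)).2 h_exp_two], ?_⟩
  rw [show -(1 + (log (G / B) - 1)) = -log (G / B) by ring, exp_neg, exp_log (by positivity)]
  field_simp

end

theorem stmt_4_general (G B : ℝ) (hG : 0 < G) :
    (B ≥ G * Real.exp (-2) →
      IsMaxOn (fun π : ℝ => min (π * G * Real.exp (-(1 + π))) (π * B))
        (Set.Ici (0 : ℝ)) 1 ∧
      min ((1 : ℝ) * G * Real.exp (-(1 + 1))) ((1 : ℝ) * B) = G * Real.exp (-2)) ∧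
    (0 < B → B < G * Real.exp (-2) →
      IsMaxOn (fun π : ℝ => min (π * G * Real.exp (-(1 + π))) (π * B))
        (Set.Ici (0 : ℝ)) (Real.log (G / B) - 1) ∧
      min ((Real.log (G / B) - 1) * G * Real.exp (-(1 + (Real.log (G / B) - 1))))
          ((Real.log (G / B) - 1) * B) = B * (Real.log (G / B) - 1)) := by
  refine ⟨fun hBG => ⟨(isMaxOn_revenue_one hG.le hBG).on_subset (Set.subset_univ _), ?_⟩,
    fun hB hBG => ?_⟩
  · rw [min_eq_left] <;> norm_num [hBG]
  · obtain ⟨hp1, hp⟩ := clearing_price_spec hB hBG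
    exact ⟨(isMaxOn_revenue_of_clearing hG.le hB.le hp1.le hp).on_subset (Set.subset_univ _),
      (revenue_of_clearing hp).trans (mul_comm _ _)⟩

/-- Optimal pricing: maximizing `min(π·G·e^{−(1+π)}, π·B)` over `π ≥ 0`.
If `B ≥ G·e^{−2}` the maximum is at `π* = 1` with value `G·e^{−2}`;
if `0 < B < G·e^{−2}` it is at `π* = ln(G/B) − 1` with value `B·(ln(G/B) − 1)`. -/
theorem stmt_4 (G B : ℝ) (hG : 0 < G) (hB : 0 ≤ B) :
    (B ≥ G * Real.exp (-2) →
      IsMaxOn (fun π : ℝ => min (π * G * Real.exp (-(1 + π))) (π * B))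
        (Set.Ici (0 : ℝ)) 1 ∧
      min ((1 : ℝ) * G * Real.exp (-(1 + 1))) ((1 : ℝ) * B) = G * Real.exp (-2)) ∧
    (0 < B → B < G * Real.exp (-2) →
      IsMaxOn (fun π : ℝ => min (π * G * Real.exp (-(1 + π))) (π * B))
        (Set.Ici (0 : ℝ)) (Real.log (G / B) - 1) ∧
      min ((Real.log (G / B) - 1) * G * Real.exp (-(1 + (Real.log (G / B) - 1))))
          ((Real.log (G / B) - 1) * B) = B * (Real.log (G / B) - 1)) :=
  stmt_4_general G B hG
end

section
/- Given sensing result B_s·α with 0 ≤ B_s·α ≤ G·e^{−2}, the leasing amount maximizing R(B_l) = (B_l + B_s·α)·ln(G/(B_l + B_s·α)) − B_s·(α + C_s) − B_l·(1 + C_l) over 0 ≤ B_l ≤ G·e^{−2} − B_s·α is B_l* = max(G·e^{−(2+C_l)} − B_s·α, 0). -/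
/-!
In terms of the total supply `y = B_l + B_s·α`, the profit is `y log (G / y) - (1 + C_l) y` plus a
constant. This is concave in `y`, with unconstrained maximiser `G e^{-(2 + C_l)}` (where the
derivative `log (G / y) - (2 + C_l)` vanishes), so on the half-line `y ≥ B_s·α` it is maximised at
`max (G e^{-(2 + C_l)}) (B_s·α)`. Concavity enters only through the tangent-line bound, which is
`log x ≤ x - 1`.
-/

open Real Set

lemma Real.mul_log_div_le_sub {a b : ℝ} (ha : 0 < a) (hb : 0 ≤ b) :
    b * log (a / b) ≤ a - b := by
  rcases hb.eq_or_lt with rfl | hb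
  · simpa using ha.le
  · calc b * log (a / b) ≤ b * (a / b - 1) :=
          mul_le_mul_of_nonneg_left (log_le_sub_one_of_pos (by positivity)) hb.le
      _ = a - b := by field_simp

lemma Real.mul_log_div_le_tangent {G a b : ℝ} (hG : 0 < G) (ha : 0 < a) (hb : 0 ≤ b) :
    b * log (G / b) ≤ a * log (G / a) + (log (G / a) - 1) * (b - a) := by
  have hsplit : b * log (G / b) = b * log (G / a) + b * log (a / b) := by
    rcases hb.eq_or_lt with rfl | hb
    · simp
    · rw [← mul_add, ← log_mul (by positivity) (by positivity), div_mul_div_cancel₀ ha.ne']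
  linarith [mul_log_div_le_sub ha hb]

lemma Real.isMaxOn_mul_log_div_sub_mul_Ici {G k c : ℝ} (hG : 0 < G) (hc : 0 ≤ c) :
    IsMaxOn (fun y => y * log (G / y) - k * y) (Ici c) (max (G * exp (-(1 + k))) c) := by
  intro y (hy : c ≤ y)
  set t := G * exp (-(1 + k))
  set m := max t c
  have hm : 0 < m := lt_max_of_lt_left (by positivity)
  have hlog_t : log (G / t) = 1 + k := by
    rw [log_div hG.ne' (by positivity), log_mul hG.ne' (exp_ne_zero _), log_exp]
    ring
  have hslope : (log (G / m) - 1 - k) * (y - m) ≤ 0 := by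
    rcases le_total c t with hct | htc
    · simp [m, max_eq_left hct, hlog_t]
    · rw [show m = c from max_eq_right htc]
      refine mul_nonpos_of_nonpos_of_nonneg ?_ (sub_nonneg.2 hy)
      have ht : 0 < t := by positivity
      have : log (G / c) ≤ log (G / t) :=
        log_le_log (div_pos hG (ht.trans_le htc)) (div_le_div_of_nonneg_left hG.le ht htc)
      linarith
  have htangent := mul_log_div_le_tangent hG hm (hc.trans hy)
  show y * log (G / y) - k * y ≤ m * log (G / m) - k * m
  linarith

theorem stmt_7_general (G Cl Cs Bs α : ℝ) (hG : 0 < G)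
    (hBsα : 0 ≤ Bs * α) :
    IsMaxOn (fun Bl => (Bl + Bs * α) * Real.log (G / (Bl + Bs * α)) -
        Bs * (α + Cs) - Bl * (1 + Cl))
      (Set.Icc (0 : ℝ) (G * Real.exp (-2) - Bs * α))
      (max (G * Real.exp (-(2 + Cl)) - Bs * α) 0) := by
  intro Bl hBl
  have hsupply : max (G * exp (-(2 + Cl)) - Bs * α) 0 + Bs * α =
      max (G * exp (-(1 + (1 + Cl)))) (Bs * α) := by
    rw [← max_add_add_right, sub_add_cancel, zero_add, ← add_assoc, one_add_one_eq_two]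
  have hmax := isMaxOn_mul_log_div_sub_mul_Ici (k := 1 + Cl) hG hBsα
    (show Bs * α ≤ Bl + Bs * α by linarith [hBl.1])
  rw [← hsupply] at hmax
  simp only [mem_ofPred_eq] at hmax ⊢
  linarith

/-- Given sensing result `B_s·α` with `0 ≤ B_s·α ≤ G·e^{−2}`, the leasing amount
maximizing the conservative-supply profit over `0 ≤ B_l ≤ G·e^{−2} − B_s·α` is
`B_l* = max(G·e^{−(2+C_l)} − B_s·α, 0)`. -/
theorem stmt_7 (G Cl Cs Bs α : ℝ) (hG : 0 < G) (hCl : 0 < Cl) (hCs : 0 < Cs)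
    (hBsα : 0 ≤ Bs * α) (hup : Bs * α ≤ G * Real.exp (-2)) :
    IsMaxOn (fun Bl => (Bl + Bs * α) * Real.log (G / (Bl + Bs * α)) -
        Bs * (α + Cs) - Bl * (1 + Cl))
      (Set.Icc (0 : ℝ) (G * Real.exp (-2) - Bs * α))
      (max (G * Real.exp (-(2 + Cl)) - Bs * α) 0) :=
  stmt_7_general G Cl Cs Bs α hG hBsα
end

section
/- For α uniformly distributed on [0,1] and B_s ∈ (G·e^{−(2+C_l)}, G·e^{−2}], the expected Stage-II profit R₂(B_s) = (B_s/2)·ln(G/B_s) − B_s/4 + (B_s/4)·(G·e^{−(2+C_l)}/B_s)² − B_s·C_s is strictly concave in B_s, with second derivative (1/(2B_s))·[(G·e^{−(2+C_l)}/B_s)² − 1] < 0. -/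
open Real Set Filter Topology

/-- The Stage-II profit as a function of `x = B_s`; the parameter `a` stands for the
threshold `G·e^{−(2+C_l)}` and `c` for `C_s`. -/
noncomputable def stageTwoProfit (G a c x : ℝ) : ℝ :=
  x / 2 * log (G / x) - x / 4 + x / 4 * (a / x) ^ 2 - x * c

section

variable {G : ℝ} (a c : ℝ) {x : ℝ}

theorem hasDerivAt_log_const_div (hG : G ≠ 0) (hx : x ≠ 0) :
    HasDerivAt (fun y => log (G / y)) (-x⁻¹) x := by
  have h : HasDerivAt (fun y => log (G / y)) ((G / x)⁻¹ * (G * -(x ^ 2)⁻¹)) x :=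
    (hasDerivAt_log (div_ne_zero hG hx)).comp x ((hasDerivAt_inv hx).const_mul G)
  exact h.congr_deriv (by field_simp)

theorem stageTwoProfit_eq_inv :
    stageTwoProfit G a c = fun x => x / 2 * log (G / x) - x / 4 + a ^ 2 / 4 * x⁻¹ - x * c := by
  ext x
  rcases eq_or_ne x 0 with rfl | hx
  · simp [stageTwoProfit]
  · simp only [stageTwoProfit]
    field_simp

theorem hasDerivAt_stageTwoProfit (hG : G ≠ 0) (hx : x ≠ 0) :
    HasDerivAt (stageTwoProfit G a c)
      (log (G / x) / 2 - 3 / 4 - a ^ 2 / 4 * (x ^ 2)⁻¹ - c) x := by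
  have h : HasDerivAt (fun x => x / 2 * log (G / x) - x / 4 + a ^ 2 / 4 * x⁻¹ - x * c)
      (1 / 2 * log (G / x) + x / 2 * -x⁻¹ - 1 / 4 + a ^ 2 / 4 * -(x ^ 2)⁻¹ - c) x :=
    (((((hasDerivAt_id x).div_const 2).mul (hasDerivAt_log_const_div hG hx)).sub
      ((hasDerivAt_id x).div_const 4)).add ((hasDerivAt_inv hx).const_mul (a ^ 2 / 4))).sub
      (hasDerivAt_mul_const c)
  rw [stageTwoProfit_eq_inv]
  exact h.congr_deriv (by field_simp; ring)

theorem hasDerivAt_deriv_stageTwoProfit (hG : G ≠ 0) (hx : x ≠ 0) :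
    HasDerivAt (deriv (stageTwoProfit G a c)) (1 / (2 * x) * ((a / x) ^ 2 - 1)) x := by
  have hderiv : (fun y => log (G / y) / 2 - 3 / 4 - a ^ 2 / 4 * (y ^ 2)⁻¹ - c)
      =ᶠ[𝓝 x] deriv (stageTwoProfit G a c) := by
    filter_upwards [isOpen_ne.mem_nhds hx] with y hy
    exact (hasDerivAt_stageTwoProfit a c hG hy).deriv.symm
  have h : HasDerivAt (fun y => log (G / y) / 2 - 3 / 4 - a ^ 2 / 4 * (y ^ 2)⁻¹ - c)
      (-x⁻¹ / 2 - a ^ 2 / 4 * (-(2 * x ^ (2 - 1)) / (x ^ 2) ^ 2)) x :=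
    ((((hasDerivAt_log_const_div hG hx).div_const 2).sub_const (3 / 4)).sub
      (((hasDerivAt_pow 2 x).inv (pow_ne_zero 2 hx)).const_mul (a ^ 2 / 4))).sub_const c
  exact (h.congr_of_eventuallyEq hderiv.symm).congr_deriv (by field_simp; ring)

theorem one_div_mul_sq_div_sub_one_neg (ha : 0 < a) (hax : a < x) :
    1 / (2 * x) * ((a / x) ^ 2 - 1) < 0 := by
  have hx : 0 < x := ha.trans hax
  have hsq : (a / x) ^ 2 < 1 :=
    pow_lt_one₀ (div_nonneg ha.le hx.le) ((div_lt_one hx).mpr hax) two_ne_zero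
  exact mul_neg_of_pos_of_neg (by positivity) (by linarith)

theorem strictConcaveOn_stageTwoProfit (hG : G ≠ 0) (ha : 0 < a) :
    StrictConcaveOn ℝ (Ioi a) (stageTwoProfit G a c) := by
  have hne : ∀ x ∈ Ioi a, x ≠ 0 := fun x hx => (ha.trans hx).ne'
  refine strictConcaveOn_of_deriv2_neg' (convex_Ioi a) ?_ fun x hx => ?_
  · exact fun x hx =>
      (hasDerivAt_stageTwoProfit a c hG (hne x hx)).continuousAt.continuousWithinAt
  · rw [Function.iterate_succ_apply, Function.iterate_one,
      (hasDerivAt_deriv_stageTwoProfit a c hG (hne x hx)).deriv]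
    exact one_div_mul_sq_div_sub_one_neg a ha hx

end

theorem stmt_10_general (G Cl Cs : ℝ) (hG : 0 < G) :
    StrictConcaveOn ℝ (Set.Ioc (G * Real.exp (-(2 + Cl))) (G * Real.exp (-2)))
      (fun Bs => Bs / 2 * Real.log (G / Bs) - Bs / 4 +
        Bs / 4 * (G * Real.exp (-(2 + Cl)) / Bs) ^ 2 - Bs * Cs) ∧
    ∀ Bs ∈ Set.Ioc (G * Real.exp (-(2 + Cl))) (G * Real.exp (-2)),
      deriv (deriv (fun Bs => Bs / 2 * Real.log (G / Bs) - Bs / 4 +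
          Bs / 4 * (G * Real.exp (-(2 + Cl)) / Bs) ^ 2 - Bs * Cs)) Bs =
        1 / (2 * Bs) * ((G * Real.exp (-(2 + Cl)) / Bs) ^ 2 - 1) ∧
      1 / (2 * Bs) * ((G * Real.exp (-(2 + Cl)) / Bs) ^ 2 - 1) < 0 := by
  set a := G * exp (-(2 + Cl))
  have ha : 0 < a := by positivity
  change StrictConcaveOn ℝ _ (stageTwoProfit G a Cs) ∧
    ∀ Bs ∈ _, deriv (deriv (stageTwoProfit G a Cs)) Bs = _ ∧ _
  refine ⟨(strictConcaveOn_stageTwoProfit a Cs hG.ne' ha).subset Ioc_subset_Ioi_self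
    (convex_Ioc _ _), fun x hx => ⟨?_, one_div_mul_sq_div_sub_one_neg a ha hx.1⟩⟩
  exact (hasDerivAt_deriv_stageTwoProfit a Cs hG.ne' (ha.trans hx.1).ne').deriv

/-- For `B_s ∈ (G·e^{−(2+C_l)}, G·e^{−2}]`, the expected Stage-II profit
`R₂(B_s) = (B_s/2)·ln(G/B_s) − B_s/4 + (B_s/4)·(G·e^{−(2+C_l)}/B_s)² − B_s·C_s`
is strictly concave, with second derivative
`(1/(2B_s))·[(G·e^{−(2+C_l)}/B_s)² − 1] < 0`. -/
theorem stmt_10 (G Cl Cs : ℝ) (hG : 0 < G) (hCl : 0 < Cl) (hCs : 0 < Cs) :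
    StrictConcaveOn ℝ (Set.Ioc (G * Real.exp (-(2 + Cl))) (G * Real.exp (-2)))
      (fun Bs => Bs / 2 * Real.log (G / Bs) - Bs / 4 +
        Bs / 4 * (G * Real.exp (-(2 + Cl)) / Bs) ^ 2 - Bs * Cs) ∧
    ∀ Bs ∈ Set.Ioc (G * Real.exp (-(2 + Cl))) (G * Real.exp (-2)),
      deriv (deriv (fun Bs => Bs / 2 * Real.log (G / Bs) - Bs / 4 +
          Bs / 4 * (G * Real.exp (-(2 + Cl)) / Bs) ^ 2 - Bs * Cs)) Bs =
        1 / (2 * Bs) * ((G * Real.exp (-(2 + Cl)) / Bs) ^ 2 - 1) ∧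
      1 / (2 * Bs) * ((G * Real.exp (-(2 + Cl)) / Bs) ^ 2 - 1) < 0 :=
  stmt_10_general G Cl Cs hG
end

section
/- If C_s ∈ [(1 − e^{−2C_l})/4, C_l/2], the equation (1/2)·ln(G/B_s) − 3/4 − C_s − (G·e^{−(2+C_l)}/(2B_s))² = 0 has a unique solution B_s^{L*} in the interval [G·e^{−(2+C_l)}, G·e^{−2}], and B_s^{L*} is linear (homogeneous of degree 1) in G. -/
/-!
Write `a = G e^{-(2+C_l)}`. The condition says `ψ(B) = ½ log G − 3/4 − C_s` for
`ψ(x) = halfLogAddSq a x = ½ log x + (a / 2x)²`, which is strictly increasing on `[a, ∞)`: for `a ≤ x < y`,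
`½ log (y/x) > (1 − (x/y)²)/4 ≥ (a/2x)² − (a/2y)²`. The two bounds on `C_s` say exactly that
`ψ(a) ≤ ½ log G − 3/4 − C_s ≤ ψ(G e^{-2})`, so the intermediate value theorem gives the unique
root. Homogeneity holds because the condition only involves `G / B` and `a / B`.
-/

open Real Set

lemma Real.one_sub_inv_lt_log {x : ℝ} (hx : 1 < x) : 1 - x⁻¹ < log x := by
  have := log_lt_sub_one_of_pos (inv_pos.2 (zero_lt_one.trans hx)) (inv_ne_one.2 hx.ne')
  rw [log_inv] at this
  linarith

noncomputable def halfLogAddSq (a x : ℝ) : ℝ := log x / 2 + (a / (2 * x)) ^ 2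

lemma continuousOn_halfLogAddSq (a : ℝ) : ContinuousOn (halfLogAddSq a) (Ioi 0) := by
  intro x (hx : 0 < x)
  unfold halfLogAddSq
  exact ContinuousAt.continuousWithinAt (by fun_prop (disch := positivity))

lemma halfLogAddSq_self {a : ℝ} (ha : a ≠ 0) : halfLogAddSq a a = log a / 2 + 1 / 4 := by
  unfold halfLogAddSq
  field_simp
  ring

lemma strictMonoOn_halfLogAddSq {a : ℝ} (ha : 0 < a) : StrictMonoOn (halfLogAddSq a) (Ici a) := by
  intro x hx y _ hxy
  have hx0 : 0 < x := ha.trans_le hx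
  have hy0 : 0 < y := hx0.trans hxy
  have hlog : 1 - (x / y) ^ 2 < 2 * (log y - log x) := by
    have h := one_sub_inv_lt_log (x := (y / x) ^ 2)
      (one_lt_pow₀ ((one_lt_div hx0).2 hxy) two_ne_zero)
    rwa [← inv_pow, inv_div, log_pow, log_div hy0.ne' hx0.ne', Nat.cast_ofNat] at h
  have hax : (a / x) ^ 2 ≤ 1 := pow_le_one₀ (div_nonneg ha.le hx0.le) ((div_le_one hx0).2 hx)
  have hxy' : 0 ≤ 1 - (x / y) ^ 2 :=
    sub_nonneg.2 (pow_le_one₀ (div_nonneg hx0.le hy0.le) ((div_le_one hy0).2 hxy.le))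
  have hsq : (a / (2 * x)) ^ 2 - (a / (2 * y)) ^ 2 = (a / x) ^ 2 * (1 - (x / y) ^ 2) / 4 := by
    field_simp
    ring
  unfold halfLogAddSq
  nlinarith [mul_le_of_le_one_left hxy' hax]

lemma existsUnique_mem_Icc_eq_of_strictMonoOn {f : ℝ → ℝ} {a b c : ℝ} (hab : a ≤ b)
    (hcont : ContinuousOn f (Icc a b)) (hmono : StrictMonoOn f (Icc a b))
    (hc : c ∈ Icc (f a) (f b)) : ∃! x, x ∈ Icc a b ∧ f x = c := by
  obtain ⟨x, hx, rfl⟩ := intermediate_value_Icc hab hcont hc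
  exact ⟨x, ⟨hx, rfl⟩, fun y hy => hmono.injOn hy.1 hx hy.2⟩

lemma half_log_div_sub_sq_eq_zero_iff {G x : ℝ} (a c : ℝ) (hG : G ≠ 0) (hx : x ≠ 0) :
    1 / 2 * log (G / x) - 3 / 4 - c - (a / (2 * x)) ^ 2 = 0 ↔
      halfLogAddSq a x = log G / 2 - 3 / 4 - c := by
  rw [halfLogAddSq, log_div hG hx]
  constructor <;> intro h <;> linarith

/-- If `C_s ∈ [(1 − e^{−2C_l})/4, C_l/2]`, the first-order condition
`(1/2)·ln(G/B_s) − 3/4 − C_s − (G·e^{−(2+C_l)}/(2B_s))² = 0` has a unique solution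
`B_s^{L*}` in `[G·e^{−(2+C_l)}, G·e^{−2}]`, and this solution is homogeneous of
degree 1 in `G`. -/
theorem stmt_12 (G Cl Cs : ℝ) (hG : 0 < G) (hCl : 0 < Cl)
    (hCs1 : (1 - Real.exp (-(2 * Cl))) / 4 ≤ Cs) (hCs2 : Cs ≤ Cl / 2) :
    (∃! Bs : ℝ, Bs ∈ Set.Icc (G * Real.exp (-(2 + Cl))) (G * Real.exp (-2)) ∧
      1 / 2 * Real.log (G / Bs) - 3 / 4 - Cs -
        (G * Real.exp (-(2 + Cl)) / (2 * Bs)) ^ 2 = 0) ∧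
    ∀ t > (0 : ℝ), ∀ Bs : ℝ,
      (Bs ∈ Set.Icc (G * Real.exp (-(2 + Cl))) (G * Real.exp (-2)) ∧
        1 / 2 * Real.log (G / Bs) - 3 / 4 - Cs -
          (G * Real.exp (-(2 + Cl)) / (2 * Bs)) ^ 2 = 0) →
      (t * Bs ∈ Set.Icc (t * G * Real.exp (-(2 + Cl))) (t * G * Real.exp (-2)) ∧
        1 / 2 * Real.log (t * G / (t * Bs)) - 3 / 4 - Cs -
          (t * G * Real.exp (-(2 + Cl)) / (2 * (t * Bs))) ^ 2 = 0) := by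
  set a := G * exp (-(2 + Cl))
  set b := G * exp (-2)
  have ha : 0 < a := by positivity
  have hab : a ≤ b := mul_le_mul_of_nonneg_left (exp_le_exp.2 (by linarith)) hG.le
  have hfa : halfLogAddSq a a = log G / 2 - 3 / 4 - Cl / 2 := by
    rw [halfLogAddSq_self ha.ne', log_mul hG.ne' (exp_pos _).ne', log_exp]
    ring
  have hfb : halfLogAddSq a b = log G / 2 - 1 + exp (-(2 * Cl)) / 4 := by
    have hab_ratio : a / b = exp (-Cl) := by
      rw [mul_div_mul_left _ _ hG.ne', ← exp_sub]
      ring_nf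
    rw [halfLogAddSq, log_mul hG.ne' (exp_pos _).ne', log_exp, ← div_div, div_right_comm,
      hab_ratio, div_pow, ← exp_nat_mul]
    ring_nf
  constructor
  · have hsol := existsUnique_mem_Icc_eq_of_strictMonoOn hab
      ((continuousOn_halfLogAddSq a).mono fun x hx => ha.trans_le hx.1)
      ((strictMonoOn_halfLogAddSq ha).mono Icc_subset_Ici_self)
      (c := log G / 2 - 3 / 4 - Cs) ⟨by linarith, by linarith⟩
    refine (existsUnique_congr fun x => and_congr_right fun hx => ?_).2 hsol
    exact half_log_div_sub_sq_eq_zero_iff a Cs hG.ne' (ha.trans_le hx.1).ne'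
  · rintro t ht Bs ⟨⟨hlo, hhi⟩, hfoc⟩
    refine ⟨⟨?_, ?_⟩, ?_⟩
    · rw [mul_assoc]; exact mul_le_mul_of_nonneg_left hlo ht.le
    · rw [mul_assoc]; exact mul_le_mul_of_nonneg_left hhi ht.le
    · rwa [mul_div_mul_left _ _ ht.ne', mul_assoc t G, mul_left_comm 2 t,
        mul_div_mul_left _ _ ht.ne']
end

section
/- In the low sensing cost regime, the realized profit as a function of α, given by R(α) = G·e^{−(2+C_l)} − B_s^{L*}·C_s + B_s^{L*}·α·C_l for α ≤ G·e^{−(2+C_l)}/B_s^{L*} and R(α) = B_s^{L*}·α·(ln(G/(B_s^{L*}·α)) − 1) − B_s^{L*}·C_s for α ≥ G·e^{−(2+C_l)}/B_s^{L*}, is continuous and strictly increasing on (0, 1], using that B_s^{L*} ≤ G·e^{−2}. -/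
/-!
Put `E = G e^{-(2+C_l)}` and `t = E / B`. Below `t` the profit is affine with slope `B C_l > 0`.
Above `t` it is `φ(B α) - B C_s` with `φ(u) = u (log (G / u) - 1)`, and
`φ'(u) = log (G / u) - 2` is positive for `u < G e^{-2}`; this covers the whole range since
`B α ≤ B ≤ G e^{-2}`.
The pieces agree at `t` because `log (G / (B t)) = log (G / E) = 2 + C_l`, and gluing two
continuous strictly increasing pieces that agree at the junction keeps both properties.
-/

open Real Set

section Gluing

variable {α β : Type*} [LinearOrder α] {f g : α → β} {a b c : α}

theorem eqOn_ite_le_Ici (hfg : f c = g c) :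
    EqOn (fun x => if x ≤ c then f x else g x) g (Ici c) := fun x hx => by
  rcases (mem_Ici.1 hx).eq_or_lt with rfl | hcx
  · simp [hfg]
  · simp [not_le.2 hcx]

theorem ContinuousOn.ite_le [TopologicalSpace α] [OrderClosedTopology α] [TopologicalSpace β]
    (hf : ContinuousOn f (Icc a c)) (hg : ContinuousOn g (Icc c b)) (hfg : f c = g c) :
    ContinuousOn (fun x => if x ≤ c then f x else g x) (Icc a b) := by
  have hleft : ContinuousOn (fun x => if x ≤ c then f x else g x) (Icc a c) :=
    hf.congr fun x hx => if_pos hx.2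
  have hright : ContinuousOn (fun x => if x ≤ c then f x else g x) (Icc c b) :=
    hg.congr ((eqOn_ite_le_Ici hfg).mono Icc_subset_Ici_self)
  refine (hleft.union_of_isClosed hright isClosed_Icc isClosed_Icc).mono fun x hx => ?_
  rcases le_total x c with hxc | hcx
  · exact Or.inl ⟨hx.1, hxc⟩
  · exact Or.inr ⟨hcx, hx.2⟩

theorem StrictMonoOn.ite_le [Preorder β] (hac : a ≤ c) (hcb : c ≤ b)
    (hf : StrictMonoOn f (Icc a c)) (hg : StrictMonoOn g (Icc c b)) (hfg : f c = g c) :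
    StrictMonoOn (fun x => if x ≤ c then f x else g x) (Icc a b) := by
  have hleft : StrictMonoOn (fun x => if x ≤ c then f x else g x) (Icc a c) :=
    hf.congr fun x hx => (if_pos hx.2).symm
  have hright : StrictMonoOn (fun x => if x ≤ c then f x else g x) (Icc c b) :=
    hg.congr ((eqOn_ite_le_Ici hfg).mono Icc_subset_Ici_self).symm
  rw [← Icc_union_Icc_eq_Icc hac hcb]
  exact hleft.union hright (isGreatest_Icc hac) (isLeast_Icc hcb)

end Gluing

theorem Real.log_div_mul_exp_neg {G : ℝ} (hG : G ≠ 0) (x : ℝ) :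
    log (G / (G * exp (-x))) = x := by
  rw [log_div hG (mul_ne_zero hG (exp_pos _).ne'), log_mul hG (exp_pos _).ne', log_exp]
  ring

theorem Real.hasDerivAt_mul_log_div_sub_one {G u : ℝ} (hG : G ≠ 0) (hu : u ≠ 0) :
    HasDerivAt (fun u => u * (log (G / u) - 1)) (log (G / u) - 2) u := by
  have hexpand :
      (fun u => u * (log G - 1) - u * log u) =ᶠ[nhds u] fun u => u * (log (G / u) - 1) := by
    filter_upwards [isOpen_ne.mem_nhds hu] with v hv
    rw [log_div hG hv]
    ring
  refine ((((hasDerivAt_id u).mul_const (log G - 1)).sub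
    (hasDerivAt_mul_log hu)).congr_of_eventuallyEq hexpand.symm).congr_deriv ?_
  rw [log_div hG hu]
  ring

theorem Real.continuousOn_mul_log_div_sub_one {G : ℝ} (hG : G ≠ 0) :
    ContinuousOn (fun u => u * (log (G / u) - 1)) {0}ᶜ := fun _ hu =>
  (hasDerivAt_mul_log_div_sub_one hG hu).continuousAt.continuousWithinAt

theorem Real.strictMonoOn_mul_log_div_sub_one {G : ℝ} (hG : 0 < G) :
    StrictMonoOn (fun u => u * (log (G / u) - 1)) (Ioc 0 (G * exp (-2))) := by
  refine strictMonoOn_of_deriv_pos (convex_Ioc _ _)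
    ((continuousOn_mul_log_div_sub_one hG.ne').mono fun u hu => hu.1.ne') fun u hu => ?_
  rw [interior_Ioc] at hu
  rw [(hasDerivAt_mul_log_div_sub_one hG.ne' hu.1.ne').deriv, sub_pos,
    ← log_div_mul_exp_neg hG.ne' 2]
  exact log_lt_log (by positivity) (div_lt_div_of_pos_left hG hu.1 hu.2)

theorem stmt_13_general (G Cl Cs Bs : ℝ) (hG : 0 < G) (hCl : 0 < Cl)
    (hBs : Bs ∈ Set.Icc (G * Real.exp (-(2 + Cl))) (G * Real.exp (-2))) :
    ContinuousOn (fun α : ℝ =>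
        if α ≤ G * Real.exp (-(2 + Cl)) / Bs then
          G * Real.exp (-(2 + Cl)) - Bs * Cs + Bs * α * Cl
        else Bs * α * (Real.log (G / (Bs * α)) - 1) - Bs * Cs)
      (Set.Ioc (0 : ℝ) 1) ∧
    StrictMonoOn (fun α : ℝ =>
        if α ≤ G * Real.exp (-(2 + Cl)) / Bs then
          G * Real.exp (-(2 + Cl)) - Bs * Cs + Bs * α * Cl
        else Bs * α * (Real.log (G / (Bs * α)) - 1) - Bs * Cs)
      (Set.Ioc (0 : ℝ) 1) := by
  obtain ⟨hEBs, hBsG⟩ := hBs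
  set E := G * exp (-(2 + Cl)) with hE
  have hE0 : 0 < E := by positivity
  have hBs0 : 0 < Bs := hE0.trans_le hEBs
  have hjoin : E - Bs * Cs + Bs * (E / Bs) * Cl
      = Bs * (E / Bs) * (log (G / (Bs * (E / Bs))) - 1) - Bs * Cs := by
    rw [mul_div_cancel₀ E hBs0.ne', hE, log_div_mul_exp_neg hG.ne']
    ring
  have hmaps : MapsTo (Bs * ·) (Icc (E / Bs) 1) (Ioc 0 (G * exp (-2))) := fun α hα =>
    ⟨mul_pos hBs0 ((by positivity : 0 < E / Bs).trans_le hα.1), by nlinarith [hα.2]⟩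
  have hleft_mono : StrictMonoOn (fun α => E - Bs * Cs + Bs * α * Cl) (Icc 0 (E / Bs)) :=
    fun x _ y _ hxy => by dsimp only; gcongr
  have hright_mono : StrictMonoOn (fun α => Bs * α * (log (G / (Bs * α)) - 1) - Bs * Cs)
      (Icc (E / Bs) 1) := fun x hx y hy hxy =>
    sub_lt_sub_right ((strictMonoOn_mul_log_div_sub_one hG).comp
      ((strictMono_mul_left_of_pos hBs0).strictMonoOn _) hmaps hx hy hxy) _
  have hright_cont : ContinuousOn (fun α => Bs * α * (log (G / (Bs * α)) - 1) - Bs * Cs)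
      (Icc (E / Bs) 1) :=
    ((continuousOn_mul_log_div_sub_one hG.ne').comp (continuous_const_mul Bs).continuousOn
      fun α hα => (hmaps hα).1.ne').sub continuousOn_const
  refine ⟨(ContinuousOn.ite_le (by fun_prop) hright_cont hjoin).mono Ioc_subset_Icc_self,
    (StrictMonoOn.ite_le (by positivity) ((div_le_one hBs0).2 hEBs) hleft_mono hright_mono
      hjoin).mono Ioc_subset_Icc_self⟩

/-- In the low sensing cost regime, the realized profit
`R(α) = G·e^{−(2+C_l)} − B_s^{L*}·C_s + B_s^{L*}·α·C_l` for
`α ≤ G·e^{−(2+C_l)}/B_s^{L*}` and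
`R(α) = B_s^{L*}·α·(ln(G/(B_s^{L*}·α)) − 1) − B_s^{L*}·C_s` otherwise,
is continuous and strictly increasing on `(0,1]`. -/
theorem stmt_13 (G Cl Cs Bs : ℝ) (hG : 0 < G) (hCl : 0 < Cl) (hCs : 0 < Cs)
    (hBs : Bs ∈ Set.Icc (G * Real.exp (-(2 + Cl))) (G * Real.exp (-2))) :
    ContinuousOn (fun α : ℝ =>
        if α ≤ G * Real.exp (-(2 + Cl)) / Bs then
          G * Real.exp (-(2 + Cl)) - Bs * Cs + Bs * α * Cl
        else Bs * α * (Real.log (G / (Bs * α)) - 1) - Bs * Cs)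
      (Set.Ioc (0 : ℝ) 1) ∧
    StrictMonoOn (fun α : ℝ =>
        if α ≤ G * Real.exp (-(2 + Cl)) / Bs then
          G * Real.exp (-(2 + Cl)) - Bs * Cs + Bs * α * Cl
        else Bs * α * (Real.log (G / (Bs * α)) - 1) - Bs * Cs)
      (Set.Ioc (0 : ℝ) 1) :=
  stmt_13_general G Cl Cs Bs hG hCl hBs
end

section
/- For any α ∈ [0,1], the equilibrium price with sensing, π*(α) = 1 + C_l if B_s^{L*}·α ≤ G·e^{−(2+C_l)} and π*(α) = ln(G/(B_s^{L*}·α)) − 1 otherwise, satisfies π*(α) ≤ 1 + C_l; consequently each user's equilibrium payoff g_i·e^{−(1+π*(α))} is at least the baseline payoff g_i·e^{−(2+C_l)}. -/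
/-!
Above the threshold `G·e^{−(2+C_l)}` the price `ln(G/b) − 1` is decreasing in `b`, and at the
threshold it equals the baseline `1 + C_l`; hence the price never exceeds the baseline, and the
payoff `g·e^{−(1+π)}`, being antitone in `π`, never falls below the baseline payoff.
-/

open Real

namespace Sensing

/-- The paper's `π*(α)`, with `b = B_s^{L*}·α`. -/
noncomputable def equilibriumPrice (G Cl b : ℝ) : ℝ :=
  if b ≤ G * exp (-(2 + Cl)) then 1 + Cl else log (G / b) - 1

theorem log_div_lt_of_mul_exp_neg_lt {G a x : ℝ} (hG : 0 < G) (hx : G * exp (-a) < x) :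
    log (G / x) < a := by
  have hx_pos : 0 < x := (by positivity : 0 < G * exp (-a)).trans hx
  rw [log_lt_iff_lt_exp (div_pos hG hx_pos), div_lt_iff₀ hx_pos]
  calc G = G * exp (-a) * exp a := by rw [mul_assoc, ← exp_add, neg_add_cancel, exp_zero, mul_one]
    _ < x * exp a := by gcongr
    _ = exp a * x := mul_comm _ _

theorem equilibriumPrice_le {G : ℝ} (hG : 0 < G) (Cl b : ℝ) :
    equilibriumPrice G Cl b ≤ 1 + Cl := by
  unfold equilibriumPrice
  split_ifs with hb
  · exact le_rfl
  · linarith [log_div_lt_of_mul_exp_neg_lt hG (not_le.mp hb)]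

theorem payoff_antitone {g : ℝ} (hg : 0 ≤ g) : Antitone fun p : ℝ => g * exp (-(1 + p)) :=
  fun _ _ h => by dsimp only; gcongr

end Sensing

open Sensing in
theorem stmt_15_general (G Cl Bs gi : ℝ) (hG : 0 < G) (hgi : 0 < gi) :
    ∀ α ∈ Set.Icc (0 : ℝ) 1,
      (if Bs * α ≤ G * Real.exp (-(2 + Cl)) then 1 + Cl
        else Real.log (G / (Bs * α)) - 1) ≤ 1 + Cl ∧
      gi * Real.exp (-(1 + (if Bs * α ≤ G * Real.exp (-(2 + Cl)) then 1 + Cl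
          else Real.log (G / (Bs * α)) - 1))) ≥
        gi * Real.exp (-(2 + Cl)) := by
  intro α _
  have hprice := equilibriumPrice_le hG Cl (Bs * α)
  refine ⟨hprice, ?_⟩
  calc gi * exp (-(2 + Cl)) = gi * exp (-(1 + (1 + Cl))) := by ring_nf
    _ ≤ gi * exp (-(1 + equilibriumPrice G Cl (Bs * α))) := payoff_antitone hgi.le hprice

/-- For any `α ∈ [0,1]`, the equilibrium price with sensing
(`1 + C_l` if `B_s^{L*}·α ≤ G·e^{−(2+C_l)}`, else `ln(G/(B_s^{L*}·α)) − 1`)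
is at most `1 + C_l`; consequently each user's equilibrium payoff
`g_i·e^{−(1+π*(α))}` is at least the baseline payoff `g_i·e^{−(2+C_l)}`. -/
theorem stmt_15 (G Cl Bs gi : ℝ) (hG : 0 < G) (hCl : 0 < Cl) (hgi : 0 < gi)
    (hBs : Bs ∈ Set.Icc (G * Real.exp (-(2 + Cl))) (G * Real.exp (-2))) :
    ∀ α ∈ Set.Icc (0 : ℝ) 1,
      (if Bs * α ≤ G * Real.exp (-(2 + Cl)) then 1 + Cl
        else Real.log (G / (Bs * α)) - 1) ≤ 1 + Cl ∧
      gi * Real.exp (-(1 + (if Bs * α ≤ G * Real.exp (-(2 + Cl)) then 1 + Cl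
          else Real.log (G / (Bs * α)) - 1))) ≥
        gi * Real.exp (-(2 + Cl)) :=
  stmt_15_general G Cl Bs gi hG hgi
end

section
/- In the general SNR regime, the optimal demand of a user maximizing u(π,w) = w·ln(1 + g/w) − π·w over w > 0 is w*(π) = g/Q(π), where Q(π) is the unique positive solution of ln(1+Q) − Q/(1+Q) = π; the resulting SNR g/w*(π) = Q(π) is independent of g, and the optimal payoff (g/Q(π))·(ln(1+Q(π)) − π) = g/(1+Q(π)) is linear in g. -/
/-!
The payoff is `w * (log (1 + g/w) - π)`. Bounding `log` by its tangent line at `1 + Q` gives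
`log (1 + t) - π ≤ t / (1 + Q)` for every `t > -1`, because `Q` solves
`log (1 + Q) - Q / (1 + Q) = π`. With `t = g/w` this bounds the payoff by `g / (1 + Q)`,
which is the value attained at `w = g/Q`.
-/

namespace Real

theorem log_le_log_add_sub_div {a b : ℝ} (ha : 0 < a) (hb : 0 < b) :
    log b ≤ log a + (b - a) / a := by
  have h := log_le_sub_one_of_pos (div_pos hb ha)
  rw [log_div hb.ne' ha.ne'] at h
  rw [sub_div, div_self ha.ne']
  linarith

end Real

noncomputable def snrPayoff (g π w : ℝ) : ℝ := w * Real.log (1 + g / w) - π * w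

section

variable {g π Q : ℝ}

theorem log_one_add_sub_le_div (hQ : 0 < 1 + Q) (hsol : Real.log (1 + Q) - Q / (1 + Q) = π)
    {t : ℝ} (ht : 0 < 1 + t) : Real.log (1 + t) - π ≤ t / (1 + Q) := by
  have h := Real.log_le_log_add_sub_div hQ ht
  rw [add_sub_add_left_eq_sub, sub_div] at h
  linarith

theorem snrPayoff_le (hg : 0 ≤ g) (hQ : 0 < 1 + Q) (hsol : Real.log (1 + Q) - Q / (1 + Q) = π)
    {w : ℝ} (hw : 0 < w) : snrPayoff g π w ≤ g / (1 + Q) :=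
  calc snrPayoff g π w = w * (Real.log (1 + g / w) - π) := by rw [snrPayoff, mul_sub, mul_comm π]
    _ ≤ w * (g / w / (1 + Q)) := by
      gcongr
      exact log_one_add_sub_le_div hQ hsol (by positivity)
    _ = g / (1 + Q) := by field_simp

theorem div_mul_log_one_add_sub_eq (hQ : Q ≠ 0) (hQ' : 1 + Q ≠ 0)
    (hsol : Real.log (1 + Q) - Q / (1 + Q) = π) : g / Q * (Real.log (1 + Q) - π) = g / (1 + Q) := by
  rw [← hsol, sub_sub_cancel]
  field_simp

theorem snrPayoff_div_eq (hg : g ≠ 0) (hQ : Q ≠ 0) (hQ' : 1 + Q ≠ 0)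
    (hsol : Real.log (1 + Q) - Q / (1 + Q) = π) : snrPayoff g π (g / Q) = g / (1 + Q) := by
  rw [snrPayoff, div_div_cancel₀ hg, mul_comm π, ← mul_sub,
    div_mul_log_one_add_sub_eq hQ hQ' hsol]

end

theorem stmt_18_general (g π Q : ℝ) (hg : 0 < g) (hQ : 0 < Q)
    (hsol : Real.log (1 + Q) - Q / (1 + Q) = π) :
    IsMaxOn (fun w : ℝ => w * Real.log (1 + g / w) - π * w)
      (Set.Ioi (0 : ℝ)) (g / Q) ∧
    g / (g / Q) = Q ∧
    (g / Q) * (Real.log (1 + Q) - π) = g / (1 + Q) := by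
  have h1Q : 0 < 1 + Q := by linarith
  refine ⟨fun w hw => ?_, div_div_cancel₀ hg.ne',
    div_mul_log_one_add_sub_eq hQ.ne' h1Q.ne' hsol⟩
  change snrPayoff g π w ≤ snrPayoff g π (g / Q)
  rw [snrPayoff_div_eq hg.ne' hQ.ne' h1Q.ne' hsol]
  exact snrPayoff_le hg.le h1Q hsol hw

/-- In the general SNR regime, if `Q > 0` solves `ln(1+Q) − Q/(1+Q) = π`, then the
optimal demand of a user maximizing `w·ln(1 + g/w) − π·w` over `w > 0` is
`w* = g/Q`; the resulting SNR `g/w* = Q` is independent of `g`, and the optimal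
payoff `(g/Q)·(ln(1+Q) − π) = g/(1+Q)` is linear in `g`. -/
theorem stmt_18 (g π Q : ℝ) (hg : 0 < g) (hπ : 0 < π) (hQ : 0 < Q)
    (hsol : Real.log (1 + Q) - Q / (1 + Q) = π) :
    IsMaxOn (fun w : ℝ => w * Real.log (1 + g / w) - π * w)
      (Set.Ioi (0 : ℝ)) (g / Q) ∧
    g / (g / Q) = Q ∧
    (g / Q) * (Real.log (1 + Q) - π) = g / (1 + Q) :=
  stmt_18_general g π Q hg hQ hsol
end
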